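/- If G is a connected graph with exactly one positive anti-adjacency eigenvalue, then G contains no induced subgraph isomorphic to the disjoint union of a path on three vertices and an isolated vertex (P_3 ∪ K_1). -/

import Mathlib

/-!
The quadratic form of a real symmetric matrix with at most one positive eigenvalue is nonpositive
on a hyperplane, so it is positive definite on no plane. For the zero-diagonal anti-adjacency
matrix `A` such a plane exists as soon as some positive entry `A p q` comes with a vertex `r` having
`A p r = A q r = 0`: take `e_p + e_q` and `e_r + t e_s` for small `t > 0`, where `A r s > 0`.
In an induced `P₃ ∪ K₁` with path `b c d`, the vertex `c` is adjacent to `b` and `d` while all three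
have eccentricity at least `2`, so `(b, d, c)` is such a triple unless `min (ε b) (ε d) > 2`. Then
the diameter is at least `3`, and a diametral pair together with vertices next to its ends on
shortest paths yields a triple.
-/

/-- The eccentricity of a vertex `u` in a graph `G`: the maximum distance from `u`. -/
noncomputable def ecc {V : Type*} [Fintype V] (G : SimpleGraph V) (u : V) : ℕ :=
  Finset.univ.sup (G.dist u)

/-- The anti-adjacency (eccentricity) matrix of a graph: the `(u,v)` entry is `d_G(u,v)`
if `d_G(u,v) = min (ε_G(u)) (ε_G(v))`, and `0` otherwise. -/
noncomputable def antiAdj {V : Type*} [Fintype V] (G : SimpleGraph V) : Matrix V V ℝ :=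
  Matrix.of fun u v =>
    if G.dist u v = min (ecc G u) (ecc G v) then (G.dist u v : ℝ) else 0

open Finset Matrix

namespace Matrix
variable {n : Type*} [Fintype n] {A : Matrix n n ℝ}

lemma IsHermitian.dotProduct_mulVec_comm (hA : A.IsHermitian) (x y : n → ℝ) :
    x ⬝ᵥ A *ᵥ y = y ⬝ᵥ A *ᵥ x := by
  rw [dotProduct_mulVec, ← mulVec_transpose, (isHermitian_iff_isSymm.mp hA).eq, dotProduct_comm]

lemma IsHermitian.dotProduct_mulVec_eq_sum [DecidableEq n] (hA : A.IsHermitian) (z : n → ℝ) :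
    z ⬝ᵥ A *ᵥ z = ∑ i, hA.eigenvalues i * (⇑(hA.eigenvectorBasis i) ⬝ᵥ z) ^ 2 := by
  have hz : z = ∑ i, (⇑(hA.eigenvectorBasis i) ⬝ᵥ z) • ⇑(hA.eigenvectorBasis i) := by
    simpa [EuclideanSpace.inner_eq_star_dotProduct, dotProduct_comm] using
      congrArg WithLp.ofLp (hA.eigenvectorBasis.sum_repr' (WithLp.toLp 2 z)).symm
  nth_rw 2 [hz]
  simp only [mulVec_sum, mulVec_smul, hA.mulVec_eigenvectorBasis, dotProduct_sum,
    dotProduct_smul, smul_eq_mul]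
  refine sum_congr rfl fun i _ => ?_
  rw [dotProduct_comm z]
  ring

lemma IsHermitian.exists_eigenvalue_pos_of_dotProduct_mulVec_pos [DecidableEq n]
    (hA : A.IsHermitian) {z : n → ℝ} (hz : 0 < z ⬝ᵥ A *ᵥ z) :
    ∃ i, 0 < hA.eigenvalues i ∧ ⇑(hA.eigenvectorBasis i) ⬝ᵥ z ≠ 0 := by
  by_contra! h
  rw [hA.dotProduct_mulVec_eq_sum] at hz
  refine hz.not_ge (sum_nonpos fun i _ => ?_)
  rcases le_or_gt (hA.eigenvalues i) 0 with hi | hi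
  · exact mul_nonpos_of_nonpos_of_nonneg hi (sq_nonneg _)
  · simp [h i hi]

lemma IsHermitian.dotProduct_mulVec_smul_add_smul_pos (hA : A.IsHermitian) {x y : n → ℝ}
    (hx : 0 < x ⬝ᵥ A *ᵥ x) (hxy : (x ⬝ᵥ A *ᵥ y) ^ 2 < (x ⬝ᵥ A *ᵥ x) * (y ⬝ᵥ A *ᵥ y))
    (s : ℝ) {t : ℝ} (ht : t ≠ 0) : 0 < (s • x + t • y) ⬝ᵥ A *ᵥ (s • x + t • y) := by
  have hexpand : (s • x + t • y) ⬝ᵥ A *ᵥ (s • x + t • y) =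
      s ^ 2 * (x ⬝ᵥ A *ᵥ x) + 2 * s * t * (x ⬝ᵥ A *ᵥ y) + t ^ 2 * (y ⬝ᵥ A *ᵥ y) := by
    simp only [mulVec_add, mulVec_smul, dotProduct_add, add_dotProduct, dotProduct_smul,
      smul_dotProduct, smul_eq_mul, hA.dotProduct_mulVec_comm y x]
    ring
  rw [hexpand]
  -- With `Q = (· ⬝ᵥ A *ᵥ ·)`: `Q x x * Q z z = (s Q x x + t Q x y)² + t² (Q x x Q y y - Q x y ²)`.
  have ht2 : 0 < t ^ 2 := by positivity
  nlinarith [sq_nonneg (s * (x ⬝ᵥ A *ᵥ x) + t * (x ⬝ᵥ A *ᵥ y)), mul_pos ht2 (sub_pos.mpr hxy)]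

lemma IsHermitian.two_le_card_eigenvalues_pos [DecidableEq n] (hA : A.IsHermitian) {x y : n → ℝ}
    (hx : 0 < x ⬝ᵥ A *ᵥ x) (hxy : (x ⬝ᵥ A *ᵥ y) ^ 2 < (x ⬝ᵥ A *ᵥ x) * (y ⬝ᵥ A *ᵥ y)) :
    2 ≤ #{i | 0 < hA.eigenvalues i} := by
  -- The combination of `x` and `y` orthogonal to one positive eigenvector still has positive form.
  set c : n → (n → ℝ) → ℝ := fun i z => ⇑(hA.eigenvectorBasis i) ⬝ᵥ z
  obtain ⟨i, hi, hxi⟩ := hA.exists_eigenvalue_pos_of_dotProduct_mulVec_pos hx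
  have hz := hA.dotProduct_mulVec_smul_add_smul_pos hx hxy (-c i y) hxi
  obtain ⟨j, hj, hzj⟩ := hA.exists_eigenvalue_pos_of_dotProduct_mulVec_pos hz
  have hij : i ≠ j := by
    rintro rfl
    apply hzj
    simp only [dotProduct_add, dotProduct_smul, smul_eq_mul, c]
    ring
  exact one_lt_card.mpr ⟨i, by simpa using hi, j, by simpa using hj, hij⟩

lemma IsHermitian.two_le_card_eigenvalues_pos_of_apply_eq_zero [DecidableEq n]
    (hA : A.IsHermitian) (hdiag : ∀ i, A i i = 0) {p q r s : n}
    (hpq : 0 < A p q) (hrs : 0 < A r s) (hpr : A p r = 0) (hqr : A q r = 0) :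
    2 ≤ #{i | 0 < hA.eigenvalues i} := by
  have hsymm : ∀ i j, A j i = A i j := fun i j => by simpa using hA.apply i j
  -- `t` is small enough that `t C² < A p q * A r s`, the discriminant condition below.
  set C := A p s + A q s
  set t := A p q * A r s / (C ^ 2 + 1)
  have ht : 0 < t := by positivity
  set x : n → ℝ := Pi.single p 1 + Pi.single q 1
  set y : n → ℝ := Pi.single r 1 + t • Pi.single s 1
  have hQx : x ⬝ᵥ A *ᵥ x = 2 * A p q := by
    simp only [x, mulVec_add, dotProduct_add, add_dotProduct, mulVec_single_one,
      single_one_dotProduct, col_apply, hdiag, hsymm q p]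
    ring
  have hQy : y ⬝ᵥ A *ᵥ y = 2 * t * A r s := by
    simp only [y, mulVec_add, mulVec_smul, dotProduct_add, add_dotProduct, smul_dotProduct,
      dotProduct_smul, mulVec_single_one, single_one_dotProduct, col_apply, smul_eq_mul, hdiag,
      hsymm s r]
    ring
  have hB : x ⬝ᵥ A *ᵥ y = t * C := by
    simp only [x, y, mulVec_add, mulVec_smul, dotProduct_add, add_dotProduct, dotProduct_smul,
      mulVec_single_one, single_one_dotProduct, col_apply, smul_eq_mul, hpr, hqr]
    ring
  refine hA.two_le_card_eigenvalues_pos (x := x) (y := y) (by rw [hQx]; positivity) ?_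
  rw [hQx, hQy, hB]
  have htC : t * C ^ 2 < A p q * A r s := by
    rw [div_mul_eq_mul_div, div_lt_iff₀ (by positivity)]
    nlinarith [mul_pos hpq hrs]
  nlinarith [mul_lt_mul_of_pos_left htC ht]

end Matrix

namespace SimpleGraph

lemma Connected.exists_adj_dist_add_one_eq {V : Type*} {G : SimpleGraph V} (hG : G.Connected)
    {u v : V} (huv : u ≠ v) : ∃ w, G.Adj u w ∧ G.dist w v + 1 = G.dist u v := by
  obtain ⟨p, hp⟩ := hG.exists_walk_length_eq_dist u v
  have hnil : ¬p.Nil := fun h => huv h.eq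
  refine ⟨p.snd, p.adj_snd hnil, le_antisymm ?_ ?_⟩
  · have := dist_le p.tail
    have := p.length_tail_add_one hnil
    omega
  · have := hG.dist_triangle (u := u) (v := p.snd) (w := v)
    rw [dist_eq_one_iff_adj.mpr (p.adj_snd hnil)] at this
    omega

end SimpleGraph

section AntiAdj

variable {V : Type*} [Fintype V] {G : SimpleGraph V} {u v : V}

lemma dist_le_ecc (G : SimpleGraph V) (u v : V) : G.dist u v ≤ ecc G u :=
  le_sup (mem_univ v)

lemma exists_dist_eq_ecc [Nonempty V] (G : SimpleGraph V) (u : V) : ∃ v, G.dist u v = ecc G u := by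
  obtain ⟨v, -, hv⟩ := exists_mem_eq_sup univ univ_nonempty (G.dist u)
  exact ⟨v, hv.symm⟩

lemma ecc_le_diam (hG : G.Connected) (u : V) : ecc G u ≤ G.diam :=
  have : Nonempty V := ⟨u⟩
  Finset.sup_le fun _ _ => SimpleGraph.dist_le_diam (SimpleGraph.connected_iff_ediam_ne_top.mp hG)

lemma two_le_ecc_of_not_adj (hG : G.Connected) (huv : u ≠ v) (h : ¬G.Adj u v) : 2 ≤ ecc G u :=
  (hG.one_lt_dist_of_ne_of_not_adj huv h).trans_le (dist_le_ecc G u v)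

lemma antiAdj_self (G : SimpleGraph V) (u : V) : antiAdj G u u = 0 := by
  simp [antiAdj]

lemma antiAdj_eq_dist (h : G.dist u v = min (ecc G u) (ecc G v)) : antiAdj G u v = G.dist u v :=
  if_pos h

lemma antiAdj_eq_zero (h : G.dist u v ≠ min (ecc G u) (ecc G v)) : antiAdj G u v = 0 :=
  if_neg h

lemma antiAdj_pos (hG : G.Connected) (huv : u ≠ v) (h : G.dist u v = min (ecc G u) (ecc G v)) :
    0 < antiAdj G u v := by
  rw [antiAdj_eq_dist h]
  exact_mod_cast hG.pos_dist_of_ne huv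

lemma exists_antiAdj_pos [Nontrivial V] (hG : G.Connected) (u : V) : ∃ v, 0 < antiAdj G u v := by
  obtain ⟨w, hw⟩ := exists_ne u
  obtain ⟨v, hv⟩ := exists_dist_eq_ecc G u
  have hecc : 0 < ecc G u := (hG.pos_dist_of_ne hw.symm).trans_le (dist_le_ecc G u w)
  have huv : u ≠ v := by rintro rfl; rw [SimpleGraph.dist_self] at hv; omega
  have hle : ecc G u ≤ ecc G v := by
    rw [← hv, SimpleGraph.dist_comm]
    exact dist_le_ecc G v u
  exact ⟨v, antiAdj_pos hG huv (by rw [hv, min_eq_left hle])⟩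

end AntiAdj

section Forbidden
variable {V : Type*} [Fintype V] {G : SimpleGraph V}

/-- By `Matrix.IsHermitian.two_le_card_eigenvalues_pos_of_apply_eq_zero`, such a triple forces a
second positive eigenvalue of `antiAdj G`. -/
def IsForbiddenTriple (G : SimpleGraph V) (p q r : V) : Prop :=
  0 < antiAdj G p q ∧ antiAdj G p r = 0 ∧ antiAdj G q r = 0

lemma isForbiddenTriple_of_dist_lt {p q r : V} (hpq : 0 < antiAdj G p q)
    (hpr : G.dist p r < min (ecc G p) (ecc G r)) (hqr : G.dist q r < min (ecc G q) (ecc G r)) :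
    IsForbiddenTriple G p q r :=
  ⟨hpq, antiAdj_eq_zero hpr.ne, antiAdj_eq_zero hqr.ne⟩

lemma exists_isForbiddenTriple_of_three_le_diam (hG : G.Connected) (hD : 3 ≤ G.diam) :
    ∃ p q r, IsForbiddenTriple G p q r := by
  have : Nonempty V := (G.nontrivial_of_diam_ne_zero (by omega)).to_nonempty
  obtain ⟨u, v, huv⟩ := G.exists_dist_eq_diam
  have hu : ecc G u = G.diam := (ecc_le_diam hG u).antisymm (huv ▸ dist_le_ecc G u v)
  have hv : ecc G v = G.diam :=
    (ecc_le_diam hG v).antisymm (huv ▸ G.dist_comm (u := v) ▸ dist_le_ecc G v u)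
  have hne : u ≠ v := by rintro rfl; rw [SimpleGraph.dist_self] at huv; omega
  have hpos : 0 < antiAdj G u v := antiAdj_pos hG hne (by rw [huv, hu, hv, min_self])
  -- `w` is the second vertex of a shortest `u`-`v` path, `w'` that of a shortest `v`-`w` path.
  obtain ⟨w, huw, hwv⟩ := hG.exists_adj_dist_add_one_eq hne
  have hduw : G.dist u w = 1 := SimpleGraph.dist_eq_one_iff_adj.mpr huw
  have := ecc_le_diam hG w
  have := dist_le_ecc G w v
  by_cases hw : ecc G w = G.diam
  · exact ⟨u, v, w, isForbiddenTriple_of_dist_lt hpos (by omega) (by rw [G.dist_comm]; omega)⟩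
  have hvw : v ≠ w := by rintro rfl; rw [SimpleGraph.dist_self] at hwv; omega
  obtain ⟨w', hvw', hw'w⟩ := hG.exists_adj_dist_add_one_eq hvw
  have hdvw' : G.dist v w' = 1 := SimpleGraph.dist_eq_one_iff_adj.mpr hvw'
  have h₁ := hG.dist_triangle (u := u) (v := w') (w := v)
  have h₂ := hG.dist_triangle (u := u) (v := w) (w := w')
  have h₃ := dist_le_ecc G w' u
  have := ecc_le_diam hG w'
  rw [G.dist_comm (u := w')] at h₁ h₃ hw'w
  rw [G.dist_comm (u := v)] at hw'w
  by_cases hw' : ecc G w' = G.diam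
  · exact ⟨u, v, w', isForbiddenTriple_of_dist_lt hpos (by omega) (by omega)⟩
  have hpos' : 0 < antiAdj G w v := antiAdj_pos hG hvw.symm (by omega)
  exact ⟨w, v, w', isForbiddenTriple_of_dist_lt hpos' (by omega) (by omega)⟩

lemma exists_isForbiddenTriple_of_induced_path {a b c d : V} (hG : G.Connected) (hac : a ≠ c)
    (hbd : b ≠ d) (hbc : G.Adj b c) (hcd : G.Adj c d) (hnbd : ¬G.Adj b d) (hnac : ¬G.Adj a c) :
    ∃ p q r, IsForbiddenTriple G p q r := by
  have hb := two_le_ecc_of_not_adj hG hbd hnbd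
  have hd := two_le_ecc_of_not_adj hG hbd.symm (fun h => hnbd h.symm)
  have hc := two_le_ecc_of_not_adj hG hac.symm (fun h => hnac h.symm)
  have hdbc : G.dist b c = 1 := SimpleGraph.dist_eq_one_iff_adj.mpr hbc
  have hddc : G.dist d c = 1 := SimpleGraph.dist_eq_one_iff_adj.mpr hcd.symm
  have hdbd : G.dist b d = 2 := by
    have := hG.one_lt_dist_of_ne_of_not_adj hbd hnbd
    have := hG.dist_triangle (u := b) (v := c) (w := d)
    rw [G.dist_comm (u := c)] at this
    omega
  by_cases htight : G.dist b d = min (ecc G b) (ecc G d)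
  · exact ⟨b, d, c, isForbiddenTriple_of_dist_lt (antiAdj_pos hG hbd htight) (by omega) (by omega)⟩
  · refine exists_isForbiddenTriple_of_three_le_diam hG ?_
    have := ecc_le_diam hG b
    omega

end Forbidden

/-- A connected graph with exactly one positive anti-adjacency eigenvalue contains no induced
subgraph isomorphic to `P₃ ∪ K₁` (a path on three vertices `b, c, d` with edges `bc`, `cd`,
together with an isolated vertex `a`). -/
theorem no_induced_P3_union_K1_of_one_positive_antiadjacency_eigenvalue
    {V : Type*} [Fintype V] [DecidableEq V] (G : SimpleGraph V) (hG : G.Connected)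
    (hH : (antiAdj G).IsHermitian)
    (hone : (Finset.univ.filter (fun i => 0 < hH.eigenvalues i)).card = 1) :
    ¬ ∃ a b c d : V, a ≠ b ∧ a ≠ c ∧ a ≠ d ∧ b ≠ c ∧ b ≠ d ∧ c ≠ d ∧
      G.Adj b c ∧ G.Adj c d ∧ ¬ G.Adj b d ∧ ¬ G.Adj a b ∧ ¬ G.Adj a c ∧ ¬ G.Adj a d := by
  rintro ⟨a, b, c, d, -, hac, -, -, hbd, -, hbc, hcd, hnbd, -, hnac, -⟩
  have : Nontrivial V := ⟨⟨a, c, hac⟩⟩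
  obtain ⟨p, q, r, hpq, hpr, hqr⟩ :=
    exists_isForbiddenTriple_of_induced_path hG hac hbd hbc hcd hnbd hnac
  obtain ⟨s, hrs⟩ := exists_antiAdj_pos hG r
  have := hH.two_le_card_eigenvalues_pos_of_apply_eq_zero (antiAdj_self G) hpq hrs hpr hqr
  omega
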